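/- arXiv:1605.03830 — 7 statements merged into one kernel-verified Lean document; each statement's English description precedes it below -/
import Mathlib

section
/- Let α > 0, ξ < 0 and n ∈ ℕ. Assume L_n^{α-1}(ξ) ≠ 0 and L_{n+1}^{α-1}(ξ) ≠ 0 (which holds since all zeros of Laguerre–Sonin polynomials are positive). Let P_n be the real polynomial satisfying (X - ξ)·P_n(X) = L_{n+1}^{α-1}(X) - (L_{n+1}^{α-1}(ξ)/L_n^{α-1}(ξ))·L_n^{α-1}(X) (this division is exact since the right-hand side vanishes at ξ). Then P_n is monic of degree n, ∫_0^∞ q(x)·P_n(x)·(x-ξ)·x^{α-1}·e^{-x} dx = 0 for every real polynomial q of degree at most n-1, and ∫_0^∞ P_n(x)²·(x-ξ)·x^{α-1}·e^{-x} dx = - n!·Γ(α+n)·L_{n+1}^{α-1}(ξ)/L_n^{α-1}(ξ). -/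
open Polynomial MeasureTheory

/-- The monic Laguerre–Sonin polynomial `L_n^α`. -/
noncomputable def laguerreS (α : ℝ) (n : ℕ) : Polynomial ℝ :=
  ∑ m ∈ Finset.range (n + 1),
    Polynomial.C ((-1 : ℝ) ^ n * n.factorial * ((-1 : ℝ) ^ m / m.factorial) *
      (Real.Gamma ((n : ℝ) + α + 1) /
        (Real.Gamma ((m : ℝ) + α + 1) * (n - m).factorial))) *
      Polynomial.X ^ m

/-!
Integration against `x^(α-1) e^(-x)` on `(0, ∞)` is the linear functional `gammaMoment α` on
polynomials sending `X^k` to `Γ(α+k)`. Pairing `X^m` with `L_n^(α-1)` under it and using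
`Γ(α+k+m) = Γ(α+k)·(α+k)_m` turns the sum over the coefficients of `L_n^(α-1)` into an `n`-th
forward difference of the degree-`m` polynomial `k ↦ (α+k)_m`; it therefore vanishes for `m < n`
and equals `n! Γ(α+n)` for `m = n`. Since `(X-ξ) P_n = L_{n+1}^(α-1) - c L_n^(α-1)` with
`c = L_{n+1}^(α-1)(ξ) / L_n^(α-1)(ξ)`, the integral of `q P_n (x-ξ) x^(α-1) e^(-x)` is
`-c q_n n! Γ(α+n)` for every `q` of degree at most `n`, where `q_n` is the coefficient of `X^n`.
Taking `q_n = 0`, resp. `q = P_n`, gives the orthogonality and the norm.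
-/

open Finset

theorem sum_range_neg_one_pow_mul_choose_mul_eval {R : Type*} [CommRing R] {n : ℕ} {Q : R[X]}
    (hQ : Q.natDegree ≤ n) :
    ∑ k ∈ range (n + 1), (-1 : R) ^ k * n.choose k * Q.eval (k : R) =
      (-1) ^ n * n.factorial * Q.coeff n := by
  have hΔ : (fwdDiff 1)^[n] Q.eval 0 = Q.coeff n * n.factorial := by
    rcases hQ.lt_or_eq with hlt | rfl
    · rw [Q.fwdDiff_iter_eq_zero_of_degree_lt hlt, coeff_eq_zero_of_natDegree_lt hlt]
      simp
    · rw [Q.fwdDiff_iter_degree_eq_factorial, Pi.smul_apply, smul_eq_mul, leadingCoeff]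
      simp
  rw [fwdDiff_iter_eq_sum_shift] at hΔ
  calc ∑ k ∈ range (n + 1), (-1 : R) ^ k * n.choose k * Q.eval (k : R)
      = (-1) ^ n * ∑ k ∈ range (n + 1),
          ((-1 : ℤ) ^ (n - k) * n.choose k) • Q.eval (0 + k • 1) := by
        rw [mul_sum]
        refine sum_congr rfl fun k hk => ?_
        obtain ⟨j, rfl⟩ := Nat.exists_eq_add_of_le (mem_range_succ_iff.mp hk)
        simp only [Nat.add_sub_cancel_left, zsmul_eq_mul, nsmul_eq_mul, mul_one, zero_add]
        push_cast
        ring_nf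
        simp
    _ = (-1) ^ n * n.factorial * Q.coeff n := by rw [hΔ]; ring

theorem Real.Gamma_add_natCast_eq_mul_ascPochhammer_eval {z : ℝ} (hz : 0 < z) (m : ℕ) :
    Real.Gamma (z + m) = Real.Gamma z * (ascPochhammer ℝ m).eval z := by
  induction m with
  | zero => simp
  | succ m ih =>
    rw [ascPochhammer_succ_eval, Nat.cast_succ, ← add_assoc, Real.Gamma_add_one (by positivity), ih]
    ring

noncomputable def gammaMoment (α : ℝ) : ℝ[X] →ₗ[ℝ] ℝ :=
  Polynomial.lsum fun k => Real.Gamma (α + k) • LinearMap.id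

theorem gammaMoment_monomial (α a : ℝ) (k : ℕ) :
    gammaMoment α (monomial k a) = Real.Gamma (α + k) * a := by
  simp [gammaMoment, lsum_apply]

theorem pow_mul_rpow_sub_one_mul_exp_neg (α : ℝ) (k : ℕ) {x : ℝ} (hx : 0 < x) :
    x ^ k * x ^ (α - 1) * Real.exp (-x) = Real.exp (-x) * x ^ (α + k - 1) := by
  rw [add_sub_right_comm, Real.rpow_add hx, Real.rpow_natCast]
  ring

theorem integrableOn_eval_mul_rpow_mul_exp {α : ℝ} (hα : 0 < α) (p : ℝ[X]) :
    IntegrableOn (fun x => p.eval x * x ^ (α - 1) * Real.exp (-x)) (Set.Ioi 0) := by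
  induction p using Polynomial.induction_on' with
  | add p q hp hq =>
    simp only [eval_add, add_mul]
    exact hp.add hq
  | monomial k a =>
    simp only [eval_monomial, mul_assoc]
    refine Integrable.const_mul ?_ a
    refine (Real.GammaIntegral_convergent (by positivity : 0 < α + k)).congr_fun
      (fun x hx => ?_) measurableSet_Ioi
    rw [← mul_assoc, pow_mul_rpow_sub_one_mul_exp_neg α k hx]

theorem integral_eval_mul_rpow_mul_exp {α : ℝ} (hα : 0 < α) (p : ℝ[X]) :
    ∫ x in Set.Ioi 0, p.eval x * x ^ (α - 1) * Real.exp (-x) = gammaMoment α p := by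
  induction p using Polynomial.induction_on' with
  | add p q hp hq =>
    simp only [eval_add, add_mul, map_add]
    rw [integral_add (integrableOn_eval_mul_rpow_mul_exp hα p)
      (integrableOn_eval_mul_rpow_mul_exp hα q), hp, hq]
  | monomial k a =>
    simp only [eval_monomial, mul_assoc, gammaMoment_monomial]
    rw [integral_const_mul, Real.Gamma_eq_integral (by positivity), mul_comm]
    congr 1
    refine setIntegral_congr_fun measurableSet_Ioi (fun x hx => ?_)
    rw [← mul_assoc, pow_mul_rpow_sub_one_mul_exp_neg α k hx]

theorem laguerreS_coeff (α : ℝ) (n k : ℕ) :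
    (laguerreS α n).coeff k = if k ≤ n then
      (-1 : ℝ) ^ n * n.factorial * ((-1 : ℝ) ^ k / k.factorial) *
      (Real.Gamma ((n : ℝ) + α + 1) /
        (Real.Gamma ((k : ℝ) + α + 1) * (n - k).factorial)) else 0 := by
  simp only [laguerreS, finsetSum_coeff, coeff_C_mul, coeff_X_pow, mul_ite, mul_one, mul_zero,
    sum_ite_eq, mem_range, Nat.lt_succ_iff]

theorem laguerreS_natDegree_le (α : ℝ) (n : ℕ) : (laguerreS α n).natDegree ≤ n :=
  natDegree_le_iff_coeff_eq_zero.mpr fun k hk => by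
    rw [laguerreS_coeff, if_neg (not_le.mpr (by exact_mod_cast hk))]

theorem laguerreS_coeff_self {α : ℝ} (hα : -1 < α) (n : ℕ) : (laguerreS α n).coeff n = 1 := by
  have hΓ : Real.Gamma ((n : ℝ) + α + 1) ≠ 0 :=
    (Real.Gamma_pos_of_pos (by linarith [(n.cast_nonneg : (0 : ℝ) ≤ n)])).ne'
  rw [laguerreS_coeff, if_pos le_rfl, Nat.sub_self]
  field_simp
  simp [← pow_mul]

theorem laguerreS_monic {α : ℝ} (hα : -1 < α) (n : ℕ) : (laguerreS α n).Monic :=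
  monic_of_natDegree_le_of_coeff_eq_one n (laguerreS_natDegree_le α n) (laguerreS_coeff_self hα n)

theorem laguerreS_natDegree {α : ℝ} (hα : -1 < α) (n : ℕ) : (laguerreS α n).natDegree = n :=
  natDegree_eq_of_le_of_coeff_ne_zero (laguerreS_natDegree_le α n)
    (by rw [laguerreS_coeff_self hα n]; exact one_ne_zero)

theorem gammaMoment_X_pow_mul_laguerreS {α : ℝ} (hα : 0 < α) {m n : ℕ} (hmn : m ≤ n) :
    gammaMoment α (X ^ m * laguerreS (α - 1) n) =
      if m = n then n.factorial * Real.Gamma (α + n) else 0 := by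
  set Q : ℝ[X] := (ascPochhammer ℝ m).comp (X + C α)
  have hQ_monic : Q.Monic :=
    (monic_ascPochhammer ℝ m).comp (monic_X_add_C α) (by rw [natDegree_X_add_C]; exact one_ne_zero)
  have hQ_natDegree : Q.natDegree = m := by
    rw [natDegree_comp, ascPochhammer_natDegree, natDegree_X_add_C, mul_one]
  have hQ_coeff : Q.coeff n = if m = n then 1 else 0 := by
    split_ifs with h
    · rw [← h, ← hQ_natDegree, hQ_monic.coeff_natDegree]
    · exact coeff_eq_zero_of_natDegree_lt (by omega)
  have hterm : ∀ k ∈ range (n + 1),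
      gammaMoment α (X ^ m * (C ((-1 : ℝ) ^ n * n.factorial * ((-1 : ℝ) ^ k / k.factorial) *
        (Real.Gamma ((n : ℝ) + (α - 1) + 1) /
          (Real.Gamma ((k : ℝ) + (α - 1) + 1) * (n - k).factorial))) * X ^ k)) =
      (-1) ^ n * Real.Gamma (α + n) * ((-1) ^ k * n.choose k * Q.eval (k : ℝ)) := by
    intro k hk
    have hkn : k ≤ n := mem_range_succ_iff.mp hk
    have hΓk : Real.Gamma (α + k) ≠ 0 := (Real.Gamma_pos_of_pos (by positivity)).ne'
    have hΓ : Real.Gamma (α + ↑(k + m)) = Real.Gamma (α + k) * Q.eval (k : ℝ) := by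
      rw [Nat.cast_add, ← add_assoc, Real.Gamma_add_natCast_eq_mul_ascPochhammer_eval
        (by positivity), eval_comp, eval_add, eval_X, eval_C, add_comm (k : ℝ)]
    rw [mul_left_comm, ← pow_add, add_comm m, C_mul_X_pow_eq_monomial, gammaMoment_monomial, hΓ,
      Nat.cast_choose ℝ hkn, show (n : ℝ) + (α - 1) + 1 = α + n by ring,
      show (k : ℝ) + (α - 1) + 1 = α + k by ring]
    field_simp
  rw [laguerreS, mul_sum, map_sum, sum_congr rfl hterm, ← mul_sum,
    sum_range_neg_one_pow_mul_choose_mul_eval (hQ_natDegree.trans_le hmn), hQ_coeff]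
  split_ifs
  · have hsign : ((-1 : ℝ) ^ n) ^ 2 = 1 := by rw [← pow_mul, mul_comm, pow_mul, neg_one_sq, one_pow]
    linear_combination (n.factorial * Real.Gamma (α + n)) * hsign
  · ring

theorem gammaMoment_mul_laguerreS {α : ℝ} (hα : 0 < α) {n : ℕ} {p : ℝ[X]}
    (hp : p.natDegree ≤ n) :
    gammaMoment α (p * laguerreS (α - 1) n) = p.coeff n * (n.factorial * Real.Gamma (α + n)) := by
  conv_lhs => rw [p.as_sum_range' (n + 1) (Nat.lt_succ_of_le hp)]
  rw [sum_mul, map_sum]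
  have hterm : ∀ k ∈ range (n + 1), gammaMoment α (monomial k (p.coeff k) * laguerreS (α - 1) n) =
      if k = n then p.coeff k * (n.factorial * Real.Gamma (α + n)) else 0 := by
    intro k hk
    rw [← C_mul_X_pow_eq_monomial, mul_assoc, ← smul_eq_C_mul, map_smul, smul_eq_mul,
      gammaMoment_X_pow_mul_laguerreS hα (mem_range_succ_iff.mp hk), mul_ite, mul_zero]
  rw [sum_congr rfl hterm, sum_ite_eq', if_pos (self_mem_range_succ n)]

theorem monic_and_natDegree_of_X_sub_C_mul_eq {β ξ c : ℝ} (hβ : -1 < β) {n : ℕ} {P : ℝ[X]}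
    (hP : (X - C ξ) * P = laguerreS β (n + 1) - C c * laguerreS β n) :
    P.Monic ∧ P.natDegree = n := by
  have hlt : (C c * laguerreS β n).natDegree < (laguerreS β (n + 1)).natDegree := by
    rw [laguerreS_natDegree hβ]
    exact (natDegree_C_mul_le _ _).trans_lt ((laguerreS_natDegree hβ n).trans_lt n.lt_succ_self)
  have hR_monic : (laguerreS β (n + 1) - C c * laguerreS β n).Monic :=
    (laguerreS_monic hβ (n + 1)).sub_of_left (degree_lt_degree hlt)
  have hP_monic : P.Monic := (monic_X_sub_C ξ).of_mul_monic_left (hP ▸ hR_monic)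
  refine ⟨hP_monic, ?_⟩
  have h := congrArg natDegree hP
  rw [(monic_X_sub_C ξ).natDegree_mul hP_monic, natDegree_X_sub_C,
    natDegree_sub_eq_left_of_natDegree_lt hlt, laguerreS_natDegree hβ] at h
  omega

theorem integral_eval_mul_eval_of_X_sub_C_mul_eq {α ξ c : ℝ} (hα : 0 < α) {n : ℕ} {P q : ℝ[X]}
    (hP : (X - C ξ) * P = laguerreS (α - 1) (n + 1) - C c * laguerreS (α - 1) n)
    (hq : q.natDegree ≤ n) :
    ∫ x in Set.Ioi 0, q.eval x * P.eval x * (x - ξ) * x ^ (α - 1) * Real.exp (-x) =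
      -(c * q.coeff n * (n.factorial * Real.Gamma (α + n))) := by
  calc _ = ∫ x in Set.Ioi 0, (q * ((X - C ξ) * P)).eval x * x ^ (α - 1) * Real.exp (-x) := by
        congr 1 with x
        simp only [eval_mul, eval_sub, eval_X, eval_C]
        ring
    _ = gammaMoment α (q * laguerreS (α - 1) (n + 1)) -
          c * gammaMoment α (q * laguerreS (α - 1) n) := by
        rw [integral_eval_mul_rpow_mul_exp hα, hP, mul_sub, mul_left_comm, map_sub,
          ← smul_eq_C_mul, map_smul, smul_eq_mul]
    _ = _ := by
        rw [gammaMoment_mul_laguerreS hα (hq.trans n.le_succ), gammaMoment_mul_laguerreS hα hq,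
          coeff_eq_zero_of_natDegree_lt (Nat.lt_succ_of_le hq)]
        ring

theorem stmt0_general (α ξ : ℝ) (hα : 0 < α) (n : ℕ)
    (P : Polynomial ℝ)
    (hP : (Polynomial.X - Polynomial.C ξ) * P =
      laguerreS (α - 1) (n + 1) -
        Polynomial.C ((laguerreS (α - 1) (n + 1)).eval ξ / (laguerreS (α - 1) n).eval ξ) *
          laguerreS (α - 1) n) :
    P.Monic ∧ P.natDegree = n ∧
    (∀ q : Polynomial ℝ, q.degree < n →
      ∫ x in Set.Ioi (0 : ℝ),
        q.eval x * P.eval x * (x - ξ) * x ^ (α - 1) * Real.exp (-x) = 0) ∧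
    ∫ x in Set.Ioi (0 : ℝ),
        (P.eval x) ^ 2 * (x - ξ) * x ^ (α - 1) * Real.exp (-x) =
      -((n.factorial : ℝ) * Real.Gamma (α + n) *
        (laguerreS (α - 1) (n + 1)).eval ξ / (laguerreS (α - 1) n).eval ξ) := by
  obtain ⟨hP_monic, hP_natDegree⟩ := monic_and_natDegree_of_X_sub_C_mul_eq (by linarith) hP
  refine ⟨hP_monic, hP_natDegree, fun q hq => ?_, ?_⟩
  · rw [integral_eval_mul_eval_of_X_sub_C_mul_eq hα hP (natDegree_le_of_degree_le hq.le),
      coeff_eq_zero_of_degree_lt hq]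
    ring
  · have hP_coeff : P.coeff n = 1 := hP_natDegree ▸ hP_monic.coeff_natDegree
    simp only [sq]
    rw [integral_eval_mul_eval_of_X_sub_C_mul_eq hα hP hP_natDegree.le, hP_coeff]
    ring

theorem stmt0 (α ξ : ℝ) (hα : 0 < α) (hξ : ξ < 0) (n : ℕ)
    (h1 : (laguerreS (α - 1) n).eval ξ ≠ 0)
    (h2 : (laguerreS (α - 1) (n + 1)).eval ξ ≠ 0)
    (P : Polynomial ℝ)
    (hP : (Polynomial.X - Polynomial.C ξ) * P =
      laguerreS (α - 1) (n + 1) -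
        Polynomial.C ((laguerreS (α - 1) (n + 1)).eval ξ / (laguerreS (α - 1) n).eval ξ) *
          laguerreS (α - 1) n) :
    P.Monic ∧ P.natDegree = n ∧
    (∀ q : Polynomial ℝ, q.degree < n →
      ∫ x in Set.Ioi (0 : ℝ),
        q.eval x * P.eval x * (x - ξ) * x ^ (α - 1) * Real.exp (-x) = 0) ∧
    ∫ x in Set.Ioi (0 : ℝ),
        (P.eval x) ^ 2 * (x - ξ) * x ^ (α - 1) * Real.exp (-x) =
      -((n.factorial : ℝ) * Real.Gamma (α + n) *
        (laguerreS (α - 1) (n + 1)).eval ξ / (laguerreS (α - 1) n).eval ξ) :=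
  stmt0_general α ξ hα n P hP
end

section
/- Let α > 0, ξ < 0 and n ≥ 1. Assume L_k^{α-1}(ξ) ≠ 0 for k = n, n+1, n+2 (which holds since all zeros of Laguerre–Sonin polynomials are positive). For k = n and k = n+1 let P_k be the real polynomial satisfying (X - ξ)·P_k(X) = L_{k+1}^{α-1}(X) - (L_{k+1}^{α-1}(ξ)/L_k^{α-1}(ξ))·L_k^{α-1}(X). Then, with σ_n = n(n+α)·L_n^{α-1}(ξ)/L_{n+1}^{α-1}(ξ), the polynomial identity L_n^α(X) = P_{n+1}'(X)/(n+1) - (σ_n/n)·P_n'(X) holds. -/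
open Polynomial MeasureTheory

/-!
Write `L_k = L_k^{α-1}` and `e_k = L_k(ξ)`. Evaluating the three-term recurrence
`L_{n+2} = (X - b) L_{n+1} - λ L_n`, `λ = (n+1)(n+α)`, at `ξ` shows that
`(X - ξ) (P_{n+1} - L_{n+1}) = (λ e_n / e_{n+1}) (X - ξ) P_n`, i.e.
`P_{n+1} = L_{n+1} + (n+1) (σ_n / n) P_n`. Differentiating and using
`L_{n+1}^{α-1}' = (n+1) L_n^α` gives the coherence relation.

The recurrence follows from the two contiguous relations
`L_{k+1}^β = L_{k+1}^{β+1} + (k+1) L_k^{β+1}` and `X L_k^{β+1} = L_{k+1}^β + (k+1+β) L_k^β`,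
both checked coefficientwise using `Γ(x+1) = x Γ(x)` and Pascal-type binomial identities.
-/

theorem Nat.cast_choose_succ_mul {R : Type*} [CommRing R] (k j : ℕ) :
    ((k + 1).choose j : R) * ((k : R) + 1 - j) = (k + 1) * k.choose j := by
  rcases le_or_gt j (k + 1) with hj | hj
  · have h : ((k.choose j * (k + 1) : ℕ) : R) = ((k + 1).choose j * (k + 1 - j) : ℕ) :=
      congrArg _ (Nat.choose_mul_succ_eq k j)
    push_cast [hj] at h
    linear_combination -h
  · rw [Nat.choose_eq_zero_of_lt hj, Nat.choose_eq_zero_of_lt (by omega)]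
    simp

theorem Real.Gamma_natCast_add_two {β : ℝ} (hβ : -1 < β) (k : ℕ) :
    Real.Gamma (k + β + 2) = (k + β + 1) * Real.Gamma (k + β + 1) := by
  have hpos : (0 : ℝ) < k + β + 1 := by linarith [k.cast_nonneg (α := ℝ)]
  rw [← Real.Gamma_add_one hpos.ne']
  ring_nf

theorem coeff_laguerreS (β : ℝ) (k j : ℕ) :
    (laguerreS β k).coeff j =
      (-1) ^ (k + j) * k.choose j * (Real.Gamma (k + β + 1) / Real.Gamma (j + β + 1)) := by
  simp only [laguerreS, finsetSum_coeff, coeff_C_mul_X_pow]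
  rcases le_or_gt j k with hjk | hkj
  · rw [Finset.sum_eq_single_of_mem j (by simp; omega) (fun m _ hm => if_neg (Ne.symm hm)),
      if_pos rfl, Nat.cast_choose ℝ hjk, pow_add]
    field_simp
  · rw [Finset.sum_eq_zero (fun m hm => if_neg (by simp at hm; omega)),
      Nat.choose_eq_zero_of_lt hkj]
    simp

theorem derivative_laguerreS (β : ℝ) (k : ℕ) :
    derivative (laguerreS β (k + 1)) = C ((k : ℝ) + 1) * laguerreS (β + 1) k := by
  ext j
  rw [coeff_derivative, coeff_C_mul, coeff_laguerreS, coeff_laguerreS]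
  have hchoose : ((k + 1).choose (j + 1) : ℝ) * (j + 1) = (k + 1) * k.choose j := by
    exact_mod_cast (Nat.add_one_mul_choose_eq k j).symm
  push_cast
  rw [show (k : ℝ) + 1 + β + 1 = k + (β + 1) + 1 by ring,
    show (j : ℝ) + 1 + β + 1 = j + (β + 1) + 1 by ring]
  linear_combination (-1) ^ (k + j) *
    (Real.Gamma (k + (β + 1) + 1) / Real.Gamma (j + (β + 1) + 1)) * hchoose

theorem X_mul_laguerreS_add_one (β : ℝ) (hβ : -1 < β) (k : ℕ) :
    X * laguerreS (β + 1) k = laguerreS β (k + 1) + C ((k : ℝ) + 1 + β) * laguerreS β k := by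
  have hΓ := Real.Gamma_natCast_add_two hβ k
  ext j
  rcases j with _ | j
  · simp only [coeff_X_mul_zero, coeff_add, coeff_C_mul, coeff_laguerreS, Nat.choose_zero_right]
    push_cast
    rw [show (k : ℝ) + 1 + β + 1 = k + β + 2 by ring, hΓ]
    ring
  · simp only [coeff_X_mul, coeff_add, coeff_C_mul, coeff_laguerreS]
    push_cast [Nat.choose_succ_succ]
    rw [show (k : ℝ) + 1 + β + 1 = k + β + 2 by ring, show (k : ℝ) + (β + 1) + 1 = k + β + 2 by ring,
      show (j : ℝ) + (β + 1) + 1 = j + 1 + β + 1 by ring, hΓ]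
    ring

theorem laguerreS_succ_eq_add (β : ℝ) (hβ : -1 < β) (k : ℕ) :
    laguerreS β (k + 1) = laguerreS (β + 1) (k + 1) + C ((k : ℝ) + 1) * laguerreS (β + 1) k := by
  have hΓk := Real.Gamma_natCast_add_two hβ (k + 1)
  ext j
  have hΓj := Real.Gamma_natCast_add_two hβ j
  have hj : (0 : ℝ) < j + β + 1 := by linarith [j.cast_nonneg (α := ℝ)]
  have hg : Real.Gamma (j + β + 1) ≠ 0 := (Real.Gamma_pos_of_pos hj).ne'
  simp only [coeff_add, coeff_C_mul, coeff_laguerreS]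
  push_cast at hΓk ⊢
  rw [show (k : ℝ) + 1 + (β + 1) + 1 = k + 1 + β + 2 by ring,
    show (k : ℝ) + (β + 1) + 1 = k + 1 + β + 1 by ring,
    show (j : ℝ) + (β + 1) + 1 = j + β + 2 by ring, hΓk, hΓj]
  have hj0 : (j : ℝ) + β + 1 ≠ 0 := hj.ne'
  field_simp
  linear_combination (-1) ^ (k + j) * Real.Gamma (k + 1 + β + 1) * Nat.cast_choose_succ_mul (R := ℝ) k j

theorem laguerreS_succ_succ (β : ℝ) (hβ : -1 < β) (k : ℕ) :
    laguerreS β (k + 2) = (X - C (2 * (k : ℝ) + β + 3)) * laguerreS β (k + 1) -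
      C (((k : ℝ) + 1) * ((k : ℝ) + 1 + β)) * laguerreS β k := by
  have hS := laguerreS_succ_eq_add β hβ k
  have hT := X_mul_laguerreS_add_one β hβ k
  have hT' := X_mul_laguerreS_add_one β hβ (k + 1)
  push_cast at hT'
  simp only [map_add, map_mul, map_one, map_ofNat, map_natCast] at hS hT hT' ⊢
  linear_combination (-X) * hS - hT' - ((k : ℝ[X]) + 1) * hT

theorem Polynomial.christoffel_succ_eq_add {K : Type*} [Field K] {p q r P Q : K[X]} {ξ a b : K}
    (hrec : r = (X - C a) * q - C b * p) (hp : p.eval ξ ≠ 0) (hq : q.eval ξ ≠ 0)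
    (hP : (X - C ξ) * P = q - C (q.eval ξ / p.eval ξ) * p)
    (hQ : (X - C ξ) * Q = r - C (r.eval ξ / q.eval ξ) * q) :
    Q = q + C (b * p.eval ξ / q.eval ξ) * P := by
  have hr : r.eval ξ / q.eval ξ = ξ - a - b * p.eval ξ / q.eval ξ := by
    rw [hrec]
    simp only [eval_sub, eval_mul, eval_X, eval_C]
    field_simp
  have hb : b * p.eval ξ / q.eval ξ * (q.eval ξ / p.eval ξ) = b := by field_simp
  refine mul_left_cancel₀ (X_sub_C_ne_zero ξ) ?_
  rw [hQ, mul_add, mul_left_comm, hP, hr, hrec, mul_sub, ← mul_assoc, ← C_mul, hb]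
  simp only [map_sub]
  ring

theorem stmt1_general (α ξ : ℝ) (hα : 0 < α) (n : ℕ) (hn : 1 ≤ n)
    (h1 : (laguerreS (α - 1) n).eval ξ ≠ 0)
    (h2 : (laguerreS (α - 1) (n + 1)).eval ξ ≠ 0)
    (Pn Pn1 : Polynomial ℝ)
    (hPn : (Polynomial.X - Polynomial.C ξ) * Pn =
      laguerreS (α - 1) (n + 1) -
        Polynomial.C ((laguerreS (α - 1) (n + 1)).eval ξ / (laguerreS (α - 1) n).eval ξ) *
          laguerreS (α - 1) n)
    (hPn1 : (Polynomial.X - Polynomial.C ξ) * Pn1 =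
      laguerreS (α - 1) (n + 2) -
        Polynomial.C ((laguerreS (α - 1) (n + 2)).eval ξ / (laguerreS (α - 1) (n + 1)).eval ξ) *
          laguerreS (α - 1) (n + 1)) :
    laguerreS α n =
      Polynomial.C (1 / ((n : ℝ) + 1)) * Polynomial.derivative Pn1 -
        Polynomial.C (((n : ℝ) * ((n : ℝ) + α) *
            (laguerreS (α - 1) n).eval ξ / (laguerreS (α - 1) (n + 1)).eval ξ) / (n : ℝ)) *
          Polynomial.derivative Pn := by
  have hPn1_eq :=
    christoffel_succ_eq_add (laguerreS_succ_succ (α - 1) (by linarith) n) h1 h2 hPn hPn1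
  have hderiv : derivative Pn1 = C ((n : ℝ) + 1) * laguerreS α n +
      C (((n : ℝ) + 1) * ((n : ℝ) + 1 + (α - 1)) * (laguerreS (α - 1) n).eval ξ /
        (laguerreS (α - 1) (n + 1)).eval ξ) * derivative Pn := by
    rw [hPn1_eq, derivative_add, derivative_C_mul, derivative_laguerreS, sub_add_cancel]
  have hn0 : (n : ℝ) ≠ 0 := Nat.cast_ne_zero.mpr (by omega)
  have hunit : 1 / ((n : ℝ) + 1) * ((n : ℝ) + 1) = 1 := by field_simp
  have hσ : 1 / ((n : ℝ) + 1) * (((n : ℝ) + 1) * ((n : ℝ) + 1 + (α - 1)) *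
      (laguerreS (α - 1) n).eval ξ / (laguerreS (α - 1) (n + 1)).eval ξ) =
      (n * (n + α) * (laguerreS (α - 1) n).eval ξ / (laguerreS (α - 1) (n + 1)).eval ξ) / n := by
    field_simp
    ring
  rw [hderiv, mul_add, ← mul_assoc, ← C_mul, hunit, C_1, one_mul, ← mul_assoc, ← C_mul, hσ,
    add_sub_cancel_right]

theorem stmt1 (α ξ : ℝ) (hα : 0 < α) (hξ : ξ < 0) (n : ℕ) (hn : 1 ≤ n)
    (h1 : (laguerreS (α - 1) n).eval ξ ≠ 0)
    (h2 : (laguerreS (α - 1) (n + 1)).eval ξ ≠ 0)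
    (h3 : (laguerreS (α - 1) (n + 2)).eval ξ ≠ 0)
    (Pn Pn1 : Polynomial ℝ)
    (hPn : (Polynomial.X - Polynomial.C ξ) * Pn =
      laguerreS (α - 1) (n + 1) -
        Polynomial.C ((laguerreS (α - 1) (n + 1)).eval ξ / (laguerreS (α - 1) n).eval ξ) *
          laguerreS (α - 1) n)
    (hPn1 : (Polynomial.X - Polynomial.C ξ) * Pn1 =
      laguerreS (α - 1) (n + 2) -
        Polynomial.C ((laguerreS (α - 1) (n + 2)).eval ξ / (laguerreS (α - 1) (n + 1)).eval ξ) *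
          laguerreS (α - 1) (n + 1)) :
    laguerreS α n =
      Polynomial.C (1 / ((n : ℝ) + 1)) * Polynomial.derivative Pn1 -
        Polynomial.C (((n : ℝ) * ((n : ℝ) + α) *
            (laguerreS (α - 1) n).eval ξ / (laguerreS (α - 1) (n + 1)).eval ξ) / (n : ℝ)) *
          Polynomial.derivative Pn :=
  stmt1_general α ξ hα n hn h1 h2 Pn Pn1 hPn hPn1
end

section
/- Let M ≥ 0 and n ≥ 1. Define P_n(x, M) = L_n(x) + ∑_{j=0}^{n-1} (-1)^{n+1+j}·(n!·M/(j!·(nM+1)))·L_j(x). Then for every real polynomial q of degree at most n-1, ∫_0^∞ q(x)·P_n(x, M)·e^{-x} dx + M·q(0)·P_n(0, M) = 0. -/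
open Polynomial MeasureTheory

/-- The polynomial `P_n(x, M) = L_n(x) + ∑_{j<n} (-1)^{n+1+j}·(n!·M/(j!·(nM+1)))·L_j(x)`. -/
noncomputable def Pm (M : ℝ) (n : ℕ) : Polynomial ℝ :=
  laguerreS 0 n + ∑ j ∈ Finset.range n,
    Polynomial.C ((-1 : ℝ) ^ (n + 1 + j) *
      ((n.factorial : ℝ) * M / ((j.factorial : ℝ) * ((n : ℝ) * M + 1)))) * laguerreS 0 j

open Finset Real Set

/-!
Write `P_n = L_n + c K_n` with `c = (-1)^(n+1) n! M / (nM + 1)` and `K_n = ∑_{j<n} (-1)^j L_j / j!`.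
Everything follows from the moments `∫ x^k L_j e^{-x} dx = k! j! C(k, j)`, whose alternating
binomial sum is a `j`-th forward difference of `m ↦ C(m + k, k)`. For `deg q < n` they give
`∫ q L_n e^{-x} = 0` and `∫ q K_n e^{-x} = q(0)`, so the integral equals `c q(0)`; on the other
hand `P_n(0) = (-1)^n n! + c n = (-1)^n n! / (nM + 1)`, and `M q(0) P_n(0)` cancels `c q(0)`.
-/

lemma integrableOn_pow_mul_exp_neg (m : ℕ) :
    IntegrableOn (fun x : ℝ => x ^ m * exp (-x)) (Ioi 0) := by
  simpa [mul_comm, ← rpow_natCast] using GammaIntegral_convergent (s := m + 1) (by positivity)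

lemma integral_pow_mul_exp_neg (m : ℕ) : ∫ x in Ioi (0 : ℝ), x ^ m * exp (-x) = m.factorial := by
  rw [← Gamma_nat_eq_factorial, Gamma_eq_integral (by positivity)]
  simp [mul_comm, ← rpow_natCast]

lemma integrableOn_eval_mul_exp_neg (p : ℝ[X]) :
    IntegrableOn (fun x : ℝ => p.eval x * exp (-x)) (Ioi 0) := by
  simp_rw [eval_eq_sum_range, sum_mul, mul_assoc]
  exact integrable_finsetSum _ fun m _ => (integrableOn_pow_mul_exp_neg m).const_mul _

noncomputable def expWeightIntegral : ℝ[X] →ₗ[ℝ] ℝ where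
  toFun p := ∫ x in Ioi 0, p.eval x * exp (-x)
  map_add' p q := by
    simp_rw [eval_add, add_mul]
    exact integral_add (integrableOn_eval_mul_exp_neg p) (integrableOn_eval_mul_exp_neg q)
  map_smul' a p := by
    simp_rw [eval_smul, smul_eq_mul, mul_assoc, RingHom.id_apply]
    exact integral_const_mul a _

lemma expWeightIntegral_apply (p : ℝ[X]) :
    expWeightIntegral p = ∫ x in Ioi 0, p.eval x * exp (-x) := rfl

lemma expWeightIntegral_X_pow (m : ℕ) : expWeightIntegral (X ^ m) = m.factorial := by
  simp [expWeightIntegral_apply, integral_pow_mul_exp_neg]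

lemma Int.alternating_sum_range_choose_mul_add_choose (j k : ℕ) :
    ∑ m ∈ Finset.range (j + 1), (-1 : ℤ) ^ (j - m) * j.choose m * (m + k).choose k =
      k.choose j := by
  have h := fwdDiff_iter_eq_sum_shift 1 (fun m : ℕ => ((m + k).choose k : ℤ)) j 0
  simp only [smul_eq_mul, mul_one, zero_add] at h
  rw [← h, fwdDiff_iter_comp_add 1 (fun m : ℕ => (m.choose k : ℤ)) k j 0, zero_add]
  rcases le_or_gt j k with hjk | hkj
  · obtain ⟨i, rfl⟩ := Nat.exists_eq_add_of_le hjk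
    rw [fwdDiff_iter_choose, Nat.choose_symm_add]
  · obtain ⟨i, rfl⟩ := Nat.exists_eq_add_of_lt hkj
    have hconst : (fwdDiff 1)^[k] (fun m : ℕ => (m.choose k : ℤ)) = fun _ => 1 := by
      simpa using fwdDiff_iter_choose 0 k
    rw [Nat.choose_eq_zero_of_lt (by omega), Nat.cast_zero, add_assoc, add_comm k,
      Function.iterate_add_apply, hconst, Function.iterate_succ_apply, fwdDiff_const]
    simp [fwdDiff_iter_eq_sum_shift]

lemma Int.alternating_sum_range_choose_of_lt {k n : ℕ} (hk : k < n) :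
    ∑ j ∈ Finset.range n, (-1 : ℤ) ^ j * k.choose j = 0 ^ k := by
  rw [← sum_range_add_sum_Ico _ hk, Int.alternating_sum_range_choose,
    sum_eq_zero fun j hj => by rw [Nat.choose_eq_zero_of_lt (mem_Ico.1 hj).1]; simp]
  simp [zero_pow_eq]

lemma Polynomial.linearMap_eq_of_degree_lt {R M : Type*} [CommSemiring R] [AddCommMonoid M]
    [Module R M] {φ ψ : R[X] →ₗ[R] M} {n : ℕ} (h : ∀ k < n, φ (X ^ k) = ψ (X ^ k)) {q : R[X]}
    (hq : q.degree < n) : φ q = ψ q := by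
  rcases eq_or_ne q 0 with rfl | hq0
  · simp
  rw [as_sum_range' q n ((natDegree_lt_iff_degree_lt hq0).2 hq)]
  simp only [map_sum, ← smul_X_eq_monomial, map_smul]
  exact sum_congr rfl fun k hk => by rw [h k (mem_range.1 hk)]

lemma laguerreS_zero_eq_sum (j : ℕ) :
    laguerreS 0 j = ∑ m ∈ range (j + 1),
      C ((-1 : ℝ) ^ (j - m) * j.choose m * ((j.factorial : ℝ) / m.factorial)) * X ^ m := by
  refine sum_congr rfl fun m hm => ?_
  obtain ⟨i, rfl⟩ := Nat.exists_eq_add_of_le (Nat.lt_succ_iff.1 (mem_range.1 hm))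
  have hΓ (l : ℕ) : Gamma ((l : ℝ) + 0 + 1) = l.factorial := by
    rw [add_zero, Gamma_nat_eq_factorial]
  have hsq : ((-1 : ℝ) ^ m) ^ 2 = 1 := by rw [← pow_mul, mul_comm, pow_mul]; norm_num
  rw [hΓ, hΓ, Nat.add_sub_cancel_left, Nat.cast_choose ℝ (Nat.le_add_right m i),
    Nat.add_sub_cancel_left, pow_add]
  congr 2
  field_simp
  linear_combination hsq

lemma laguerreS_zero_eval_zero (j : ℕ) : (laguerreS 0 j).eval 0 = (-1 : ℝ) ^ j * j.factorial := by
  rw [laguerreS_zero_eq_sum, eval_finsetSum, sum_eq_single 0]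
  · simp
  · intro m _ hm
    simp [hm]
  · simp

lemma expWeightIntegral_X_pow_mul_laguerreS (k j : ℕ) :
    expWeightIntegral (X ^ k * laguerreS 0 j) = k.factorial * j.factorial * k.choose j := by
  have hterm : ∀ m ∈ range (j + 1), expWeightIntegral
      (X ^ k * (C ((-1 : ℝ) ^ (j - m) * j.choose m * ((j.factorial : ℝ) / m.factorial)) * X ^ m))
      = k.factorial * j.factorial * ((-1 : ℝ) ^ (j - m) * j.choose m * (m + k).choose k) := by
    intro m _
    rw [mul_left_comm, ← pow_add, ← smul_eq_C_mul, map_smul, expWeightIntegral_X_pow, smul_eq_mul,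
      add_comm m k, Nat.cast_add_choose]
    field_simp
  have hcomb := congrArg (Int.cast : ℤ → ℝ) (Int.alternating_sum_range_choose_mul_add_choose j k)
  push_cast at hcomb
  rw [laguerreS_zero_eq_sum, mul_sum, map_sum, sum_congr rfl hterm, ← mul_sum, hcomb]

lemma expWeightIntegral_mul_laguerreS_of_degree_lt {n : ℕ} {q : ℝ[X]} (hq : q.degree < n) :
    expWeightIntegral (q * laguerreS 0 n) = 0 := by
  refine linearMap_eq_of_degree_lt
    (φ := expWeightIntegral ∘ₗ LinearMap.mulRight ℝ (laguerreS 0 n)) (ψ := 0) (fun k hk => ?_) hq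
  simp [expWeightIntegral_X_pow_mul_laguerreS, Nat.choose_eq_zero_of_lt hk]

/-- Since `L_j(0) = (-1)^j j!` and `∫ L_j² e^{-x} = (j!)²`, this is the reproducing kernel
`∑_{j<n} L_j(x) L_j(0) / ‖L_j‖²` of the polynomials of degree `< n`, evaluated at `0`. -/
noncomputable def laguerreKernel (n : ℕ) : ℝ[X] :=
  ∑ j ∈ range n, C ((-1 : ℝ) ^ j / j.factorial) * laguerreS 0 j

lemma laguerreKernel_eval_zero (n : ℕ) : (laguerreKernel n).eval 0 = n := by
  have hterm (j : ℕ) : (-1 : ℝ) ^ j / j.factorial * ((-1) ^ j * j.factorial) = 1 := by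
    field_simp
    rw [← pow_mul, pow_mul', neg_one_sq, one_pow]
  simp [laguerreKernel, eval_finsetSum, laguerreS_zero_eval_zero, hterm]

lemma expWeightIntegral_mul_laguerreKernel {n : ℕ} {q : ℝ[X]} (hq : q.degree < n) :
    expWeightIntegral (q * laguerreKernel n) = q.eval 0 := by
  refine linearMap_eq_of_degree_lt
    (φ := expWeightIntegral ∘ₗ LinearMap.mulRight ℝ (laguerreKernel n)) (ψ := leval 0)
    (fun k hk => ?_) hq
  have hcomb := congrArg (Int.cast : ℤ → ℝ) (Int.alternating_sum_range_choose_of_lt hk)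
  push_cast at hcomb
  have hterm (j : ℕ) : (-1 : ℝ) ^ j / j.factorial * (k.factorial * j.factorial * k.choose j)
      = k.factorial * ((-1) ^ j * k.choose j) := by
    field_simp
  rw [LinearMap.comp_apply, LinearMap.mulRight_apply, laguerreKernel, mul_sum, map_sum]
  simp_rw [← smul_eq_C_mul, mul_smul_comm, map_smul, expWeightIntegral_X_pow_mul_laguerreS,
    smul_eq_mul, hterm]
  rw [← mul_sum, hcomb, leval_apply, eval_pow, eval_X]
  cases k <;> simp

lemma Pm_eq_laguerreS_add_laguerreKernel (M : ℝ) (n : ℕ) :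
    Pm M n = laguerreS 0 n +
      C ((-1 : ℝ) ^ (n + 1) * n.factorial * M / (n * M + 1)) * laguerreKernel n := by
  rw [Pm, laguerreKernel, mul_sum]
  congr 1
  refine sum_congr rfl fun j _ => ?_
  rw [← mul_assoc, ← C_mul]
  congr 2
  simp only [div_eq_mul_inv, mul_inv, pow_add]
  ring

theorem stmt4_general (M : ℝ) (hM : 0 ≤ M) (n : ℕ) :
    ∀ q : Polynomial ℝ, q.degree < n →
      (∫ x in Set.Ioi (0 : ℝ), q.eval x * (Pm M n).eval x * Real.exp (-x)) +
        M * (q.eval 0 * (Pm M n).eval 0) = 0 := by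
  intro q hq
  have hint : ∫ x in Ioi (0 : ℝ), q.eval x * (Pm M n).eval x * exp (-x)
      = expWeightIntegral (q * Pm M n) := by
    simp [expWeightIntegral_apply]
  rw [hint, Pm_eq_laguerreS_add_laguerreKernel, mul_add, mul_left_comm, ← smul_eq_C_mul,
    map_add, map_smul, expWeightIntegral_mul_laguerreS_of_degree_lt hq,
    expWeightIntegral_mul_laguerreKernel hq]
  have hden : (n : ℝ) * M + 1 ≠ 0 := by positivity
  simp only [eval_add, eval_mul, eval_C, laguerreS_zero_eval_zero, laguerreKernel_eval_zero,
    smul_eq_mul]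
  field_simp
  ring

theorem stmt4 (M : ℝ) (hM : 0 ≤ M) (n : ℕ) (hn : 1 ≤ n) :
    ∀ q : Polynomial ℝ, q.degree < n →
      (∫ x in Set.Ioi (0 : ℝ), q.eval x * (Pm M n).eval x * Real.exp (-x)) +
        M * (q.eval 0 * (Pm M n).eval 0) = 0 :=
  stmt4_general M hM n
end

section
/- For all natural numbers i and j with i ≥ j, ∫_0^∞ x^i·L_j(x)·e^{-x} dx = i!·j!·C(i,j), where C(i,j) is the binomial coefficient. -/
open Polynomial MeasureTheory

/-! By the Gamma integral `∫₀^∞ xⁿ e⁻ˣ dx = n!`, the moment `∫₀^∞ xⁱ L_j(x) e⁻ˣ dx` equals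
`i! j! ∑ₘ (-1)^(j-m) C(j,m) C(i+m,i)`, the `j`-th forward difference of `k ↦ C(k,i)` at `k = i`.
By Pascal's rule each forward difference lowers the lower index by one, so the sum is
`C(i, i-j) = C(i,j)`. -/

theorem sum_range_neg_one_pow_mul_choose_mul_choose_add {i j : ℕ} (h : j ≤ i) :
    ∑ k ∈ Finset.range (j + 1), (-1 : ℤ) ^ (j - k) * j.choose k * (i + k).choose i =
      i.choose j := by
  have hdiff : (fwdDiff 1)^[j] (fun k : ℕ ↦ (k.choose i : ℤ)) = fun k ↦ k.choose (i - j) := by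
    simpa only [Nat.add_sub_cancel' h] using fwdDiff_iter_choose (i - j) j
  have := congr_fun hdiff i
  rw [fwdDiff_iter_eq_sum_shift, Nat.choose_symm h] at this
  simpa only [smul_eq_mul, mul_one, mul_assoc] using this

theorem integrableOn_pow_mul_exp_neg_Ioi (n : ℕ) :
    IntegrableOn (fun x : ℝ ↦ x ^ n * Real.exp (-x)) (Set.Ioi 0) := by
  refine (Real.GammaIntegral_convergent (s := n + 1) (by positivity)).congr_fun
    (fun x _ ↦ ?_) measurableSet_Ioi
  simp only [add_sub_cancel_right, Real.rpow_natCast, mul_comm]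

theorem integral_pow_mul_exp_neg_Ioi (n : ℕ) :
    ∫ x in Set.Ioi (0 : ℝ), x ^ n * Real.exp (-x) = n.factorial := by
  rw [← Real.Gamma_nat_eq_factorial, Real.Gamma_eq_integral (by positivity)]
  refine setIntegral_congr_fun measurableSet_Ioi fun x _ ↦ ?_
  simp only [add_sub_cancel_right, Real.rpow_natCast, mul_comm]

theorem integral_pow_mul_sum_mul_exp_neg_Ioi (i : ℕ) (s : Finset ℕ) (c : ℕ → ℝ) :
    ∫ x in Set.Ioi (0 : ℝ), x ^ i * (∑ m ∈ s, c m * x ^ m) * Real.exp (-x) =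
      ∑ m ∈ s, c m * (i + m).factorial := by
  have hsum : ∀ x : ℝ, x ^ i * (∑ m ∈ s, c m * x ^ m) * Real.exp (-x) =
      ∑ m ∈ s, c m * (x ^ (i + m) * Real.exp (-x)) := by
    intro x
    rw [Finset.mul_sum, Finset.sum_mul]
    refine Finset.sum_congr rfl fun m _ ↦ ?_
    ring
  simp_rw [hsum]
  rw [integral_finsetSum _ fun m _ ↦ (integrableOn_pow_mul_exp_neg_Ioi (i + m)).const_mul _]
  simp only [integral_const_mul, integral_pow_mul_exp_neg_Ioi]

theorem eval_laguerreS_zero (n : ℕ) (x : ℝ) :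
    (laguerreS 0 n).eval x =
      ∑ m ∈ Finset.range (n + 1),
        (-1 : ℝ) ^ n * n.factorial * ((-1 : ℝ) ^ m / m.factorial) * n.choose m * x ^ m := by
  simp only [laguerreS, eval_finsetSum, eval_mul, eval_C, eval_pow, eval_X, add_zero]
  refine Finset.sum_congr rfl fun m hm ↦ ?_
  rw [Nat.cast_choose ℝ (Finset.mem_range_succ_iff.mp hm)]
  simp only [Real.Gamma_nat_eq_factorial]

theorem stmt6 (i j : ℕ) (h : j ≤ i) :
    ∫ x in Set.Ioi (0 : ℝ), x ^ i * (laguerreS 0 j).eval x * Real.exp (-x) =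
      (i.factorial : ℝ) * (j.factorial : ℝ) * (i.choose j : ℝ) := by
  simp_rw [eval_laguerreS_zero, integral_pow_mul_sum_mul_exp_neg_Ioi]
  have hterm : ∀ m ∈ Finset.range (j + 1),
      (-1 : ℝ) ^ j * j.factorial * ((-1 : ℝ) ^ m / m.factorial) * j.choose m * (i + m).factorial =
        i.factorial * j.factorial * ((-1 : ℝ) ^ (j - m) * j.choose m * (i + m).choose i) := by
    intro m hm
    have hsign : (-1 : ℝ) ^ j * (-1) ^ m = (-1) ^ (j - m) := calc
      _ = (-1 : ℝ) ^ (j - m) * ((-1) ^ m * (-1) ^ m) := by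
        rw [← mul_assoc, ← pow_add _ (j - m), Nat.sub_add_cancel (Finset.mem_range_succ_iff.mp hm)]
      _ = (-1) ^ (j - m) := by rw [← mul_pow]; simp
    rw [← Nat.add_choose_mul_factorial_mul_factorial, ← hsign]
    push_cast
    field_simp
    rw [Nat.choose_symm_add]
  have hsum : ∑ m ∈ Finset.range (j + 1), (-1 : ℝ) ^ (j - m) * j.choose m * (i + m).choose i =
      i.choose j := by
    exact_mod_cast sum_range_neg_one_pow_mul_choose_mul_choose_add h
  rw [Finset.sum_congr rfl hterm, ← Finset.mul_sum, hsum]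
end

section
/- For all natural numbers i and j with i ≥ j, (-1)^j · ∑_{m=0}^j (-1)^m·C(j,m)·C(m+i,i) = C(i,j), where C(a,b) denotes the binomial coefficient. -/
/-!
The left-hand side is the `j`-th forward difference at `0` of `x ↦ C(x + i, i)`. By Vandermonde,
`C(x + i, i) = ∑ₐ C(i, a) C(x, a)`, and the `j`-th difference of `x ↦ C(x, a)` at `0` is `δ_{a j}`,
so the difference picks out `C(i, j)`.
-/

open Finset fwdDiff

theorem neg_one_pow_mul_sum_range_choose_mul_eq_fwdDiff_iter {R : Type*} [CommRing R]
    (f : ℕ → R) (j : ℕ) :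
    (-1 : R) ^ j * ∑ m ∈ range (j + 1), (-1 : R) ^ m * (j.choose m : R) * f m =
      (Δ_[1])^[j] f 0 := by
  rw [fwdDiff_iter_eq_sum_shift, mul_sum]
  refine sum_congr rfl fun m hm => ?_
  obtain ⟨k, rfl⟩ := Nat.exists_eq_add_of_le (mem_range_succ_iff.mp hm)
  rw [zsmul_eq_mul, zero_add, nsmul_one, Nat.cast_id, Nat.add_sub_cancel_left]
  push_cast
  have hsq : (-1 : R) ^ m * (-1) ^ m = 1 := by rw [← mul_pow, neg_one_mul, neg_neg, one_pow]
  linear_combination (-1 : R) ^ k * ((m + k).choose m : R) * f m * hsq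

theorem Nat.add_choose_eq_sum_choose_mul_choose (m n : ℕ) :
    (m + n).choose n = ∑ k ∈ range (n + 1), n.choose k * m.choose k := by
  rw [add_choose_eq, Nat.sum_antidiagonal_eq_sum_range_succ_mk]
  refine sum_congr rfl fun k hk => ?_
  rw [choose_symm (mem_range_succ_iff.mp hk), mul_comm]

theorem fwdDiff_iter_add_choose_zero (i j : ℕ) :
    (Δ_[1])^[j] (fun x ↦ ((x + i).choose i : ℤ)) 0 = i.choose j := by
  have hexpand : (fun x ↦ ((x + i).choose i : ℤ)) =
      ∑ a ∈ range (i + 1), (i.choose a : ℤ) • fun x : ℕ ↦ (x.choose a : ℤ) := by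
    ext x
    simp [Nat.add_choose_eq_sum_choose_mul_choose]
  simp only [hexpand, fwdDiff_iter_finsetSum, fwdDiff_iter_const_smul, Finset.sum_apply,
    Pi.smul_apply, fwdDiff_iter_choose_zero, smul_eq_mul, mul_ite, mul_one, mul_zero, sum_ite_eq, mem_range]
  split_ifs with hj
  · rfl
  · rw [Nat.choose_eq_zero_of_lt (by omega), Nat.cast_zero]

theorem stmt7_general (i j : ℕ) :
    (-1 : ℤ) ^ j * ∑ m ∈ Finset.range (j + 1),
        (-1 : ℤ) ^ m * (j.choose m : ℤ) * ((m + i).choose i : ℤ) =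
      (i.choose j : ℤ) := by
  rw [neg_one_pow_mul_sum_range_choose_mul_eq_fwdDiff_iter, fwdDiff_iter_add_choose_zero]

theorem stmt7 (i j : ℕ) (h : j ≤ i) :
    (-1 : ℤ) ^ j * ∑ m ∈ Finset.range (j + 1),
        (-1 : ℤ) ^ m * (j.choose m : ℤ) * ((m + i).choose i : ℤ) =
      (i.choose j : ℤ) :=
  stmt7_general i j
end

section
/- Let M ≥ 0 and n ≥ 1. Every real zero λ of the polynomial A_n satisfies λ > (1+(n+1)M)/(n(n+1)(3+(n+2)M)). -/
/-!
Put `x_k = (1 + M) (-1)^k A_k(λ)`. Then `x_{k+2} = (2 - λ) x_{k+1} - x_k`, and summing this twice gives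
`x_k = b_k - λ ∑_{j<k} ∑_{i≤j} x_i`, where `b_k = 1 + (k+1) M` is the solution for `λ = 0`.
For `λ ≤ 0` this forces `x_k ≥ b_k > 0`. For `λ > 0` an induction gives `b_k - λ S_k ≤ x_k ≤ b_k`,
with `S_k = ∑_{j<k} ∑_{i≤j} b_i = k (k+1) (3 + (k+2) M) / 6`, as long as `λ S_i ≤ b_i` for `i < k`.
The bound of the theorem is `b_n / (6 S_n)` and `S_k / b_k` increases with `k`, so below it
`x_n ≥ 5 b_n / 6 > 0` and `λ` is not a zero of `A_n`.
-/

open Polynomial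

noncomputable def ApolyB (M : ℝ) : ℕ → Polynomial ℝ
  | 0 => 1
  | 1 => Polynomial.X - Polynomial.C ((1 + 2 * M) / (1 + M))
  | n + 2 => (Polynomial.X - Polynomial.C 2) * ApolyB M (n + 1) - ApolyB M n

open Finset

section DoublePartialSum

def doublePartialSum (x : ℕ → ℝ) (k : ℕ) : ℝ :=
  ∑ j ∈ range k, ∑ i ∈ range (j + 1), x i

variable {x y : ℕ → ℝ} {lam a d : ℝ}

lemma doublePartialSum_zero (x : ℕ → ℝ) : doublePartialSum x 0 = 0 := rfl

lemma doublePartialSum_succ (x : ℕ → ℝ) (k : ℕ) :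
    doublePartialSum x (k + 1) = doublePartialSum x k + ∑ i ∈ range (k + 1), x i :=
  sum_range_succ _ k

lemma doublePartialSum_nonneg {k : ℕ} (h : ∀ i < k, 0 ≤ x i) : 0 ≤ doublePartialSum x k :=
  sum_nonneg fun j hj => sum_nonneg fun i hi => h i (by simp at hi hj; omega)

lemma doublePartialSum_mono {k : ℕ} (h : ∀ i < k, x i ≤ y i) :
    doublePartialSum x k ≤ doublePartialSum y k :=
  sum_le_sum fun j hj => sum_le_sum fun i hi => h i (by simp at hi hj; omega)

lemma doublePartialSum_arithmetic (a d : ℝ) (k : ℕ) :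
    doublePartialSum (fun i => a + i * d) k
      = a * (k * (k + 1) / 2) + d * ((k - 1) * k * (k + 1) / 6) := by
  have hsum (j : ℕ) : ∑ i ∈ range (j + 1), (a + i * d) = a * (j + 1) + d * (j * (j + 1) / 2) := by
    induction j with
    | zero => simp
    | succ j ih => rw [sum_range_succ, ih]; push_cast; ring
  induction k with
  | zero => simp [doublePartialSum_zero]
  | succ k ih => rw [doublePartialSum_succ, ih, hsum]; push_cast; ring

lemma eq_sub_doublePartialSum_of_recurrence (hx : ∀ k, x (k + 2) = (2 - lam) * x (k + 1) - x k)
    (k : ℕ) : x k = x 0 + k * (x 1 - x 0 + lam * x 0) - lam * doublePartialSum x k := by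
  induction k using Nat.twoStepInduction with
  | zero => simp [doublePartialSum_zero]
  | one =>
    simp only [Nat.cast_one, one_mul, doublePartialSum, range_one, sum_singleton, zero_add]
    ring
  | more k ih₀ ih₁ =>
    have h₁ := doublePartialSum_succ x k
    have h₂ := doublePartialSum_succ x (k + 1)
    rw [sum_range_succ _ (k + 1)] at h₂
    push_cast at ih₁ ⊢
    linear_combination hx k + 2 * ih₁ - ih₀ + lam * h₂ - lam * h₁

lemma le_of_eq_sub_doublePartialSum (hlam : lam ≤ 0) (hb : ∀ k : ℕ, 0 ≤ a + k * d)
    (hx : ∀ k, x k = a + k * d - lam * doublePartialSum x k) (k : ℕ) : a + k * d ≤ x k := by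
  induction k using Nat.strong_induction_on with
  | _ k ih =>
    have hS : 0 ≤ doublePartialSum x k :=
      doublePartialSum_nonneg fun i hi => (hb i).trans (ih i hi)
    rw [hx k]
    nlinarith

lemma mem_Icc_of_eq_sub_doublePartialSum {n : ℕ} (hlam : 0 ≤ lam)
    (hx : ∀ k, x k = a + k * d - lam * doublePartialSum x k)
    (hsmall : ∀ k < n, lam * doublePartialSum (fun i => a + i * d) k ≤ a + k * d) :
    ∀ k ≤ n, x k ∈ Set.Icc (a + k * d - lam * doublePartialSum (fun i => a + i * d) k) (a + k * d) := by
  intro k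
  induction k using Nat.strong_induction_on with
  | _ k ih =>
    intro hk
    have hnonneg : 0 ≤ doublePartialSum x k := doublePartialSum_nonneg fun i hi =>
      (sub_nonneg.2 (hsmall i (by omega))).trans (ih i hi (by omega)).1
    have hle := doublePartialSum_mono fun i hi => (ih i hi (by omega)).2
    rw [hx k]
    constructor <;> nlinarith

end DoublePartialSum

noncomputable def scaledSignedEval (M lam : ℝ) (k : ℕ) : ℝ :=
  (1 + M) * (-1) ^ k * (ApolyB M k).eval lam

lemma scaledSignedEval_eq {M : ℝ} (hM : 1 + M ≠ 0) (lam : ℝ) (k : ℕ) :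
    scaledSignedEval M lam k
      = (1 + M) + k * M - lam * doublePartialSum (scaledSignedEval M lam) k := by
  have hrec (k : ℕ) : scaledSignedEval M lam (k + 2)
      = (2 - lam) * scaledSignedEval M lam (k + 1) - scaledSignedEval M lam k := by
    simp only [scaledSignedEval, ApolyB, eval_mul, eval_sub, eval_X, eval_C, pow_succ]
    ring
  have h₀ : scaledSignedEval M lam 0 = 1 + M := by simp [scaledSignedEval, ApolyB]
  have h₁ : scaledSignedEval M lam 1 = (1 + M) * (1 - lam) + M := by
    simp only [scaledSignedEval, pow_one, mul_neg, mul_one, ApolyB, eval_sub, eval_X, eval_C]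
    field_simp
    ring
  rw [eq_sub_doublePartialSum_of_recurrence hrec k, h₀, h₁]
  ring

lemma cubic_mul_le_cubic_mul_of_le {M x y : ℝ} (hM : 0 ≤ M) (hx : 0 ≤ x) (hxy : x ≤ y) :
    x * (x + 1) * (3 + (x + 2) * M) * (1 + (y + 1) * M)
      ≤ y * (y + 1) * (3 + (y + 2) * M) * (1 + (x + 1) * M) := by
  have hy : 0 ≤ y := hx.trans hxy
  have h : (x + 1) * (1 + (y + 1) * M) ≤ (y + 1) * (1 + (x + 1) * M) := by nlinarith
  calc x * (x + 1) * (3 + (x + 2) * M) * (1 + (y + 1) * M)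
      = x * ((x + 1) * (1 + (y + 1) * M)) * (3 + (x + 2) * M) := by ring
    _ ≤ y * ((y + 1) * (1 + (x + 1) * M)) * (3 + (y + 2) * M) := by gcongr
    _ = y * (y + 1) * (3 + (y + 2) * M) * (1 + (x + 1) * M) := by ring

lemma mul_doublePartialSum_lt {M : ℝ} (hM : 0 ≤ M) {k n : ℕ} (hkn : k ≤ n) :
    (1 + ((n : ℝ) + 1) * M) / ((n : ℝ) * ((n : ℝ) + 1) * (3 + ((n : ℝ) + 2) * M))
      * doublePartialSum (fun i => (1 + M) + i * M) k < (1 + M) + k * M := by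
  rcases k.eq_zero_or_pos with rfl | hk
  · simp only [doublePartialSum_zero, mul_zero, CharP.cast_eq_zero, zero_mul, add_zero]
    linarith
  have hkn' : (k : ℝ) ≤ n := by exact_mod_cast hkn
  have hn : (1 : ℝ) ≤ n := by exact_mod_cast hk.trans_le hkn
  have hmono := cubic_mul_le_cubic_mul_of_le hM k.cast_nonneg hkn'
  have hpos : 0 < (n * (n + 1) * (3 + (n + 2) * M)) * (1 + (k + 1) * M) := by positivity
  rw [doublePartialSum_arithmetic, div_mul_eq_mul_div, div_lt_iff₀ (by positivity)]
  nlinarith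

theorem stmt9_general (M : ℝ) (hM : 0 ≤ M) (n : ℕ) (lam : ℝ)
    (h : (ApolyB M n).eval lam = 0) :
    (1 + ((n : ℝ) + 1) * M) / ((n : ℝ) * ((n : ℝ) + 1) * (3 + ((n : ℝ) + 2) * M)) < lam := by
  by_contra! hlam
  have hx := scaledSignedEval_eq (M := M) (by linarith) lam
  have hzero : scaledSignedEval M lam n = 0 := by simp [scaledSignedEval, h]
  rcases le_or_gt lam 0 with hneg | hpos
  · have hle := le_of_eq_sub_doublePartialSum hneg (fun k => by positivity) hx n
    have hnM : 0 ≤ (n : ℝ) * M := by positivity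
    linarith
  · have hS (k : ℕ) := mul_le_mul_of_nonneg_right hlam
      (doublePartialSum_nonneg (x := fun i => (1 + M) + i * M) (k := k) fun i _ => by positivity)
    have hsmall (k : ℕ) (hk : k ≤ n) := (hS k).trans_lt (mul_doublePartialSum_lt hM hk)
    have hlow := (mem_Icc_of_eq_sub_doublePartialSum hpos.le hx
      (fun k hk => (hsmall k hk.le).le) n le_rfl).1
    linarith [hsmall n le_rfl]

theorem stmt9 (M : ℝ) (hM : 0 ≤ M) (n : ℕ) (hn : 1 ≤ n) (lam : ℝ)
    (h : (ApolyB M n).eval lam = 0) :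
    (1 + ((n : ℝ) + 1) * M) / ((n : ℝ) * ((n : ℝ) + 1) * (3 + ((n : ℝ) + 2) * M)) < lam :=
  stmt9_general M hM n lam h
end

section
/- Let M ≥ 0, and for each n ≥ 1 let μ_{1,n} denote the smallest real zero of A_n. Then there exist constants C₂ ≥ C₁ > 0 (depending only on M) such that C₁/n² ≤ μ_{1,n} ≤ C₂/n² for all n ≥ 1; in particular μ_{1,n} = O(1/n²) and the Markov–Bernstein constant 1/√μ_{1,n} grows like O(n). -/
/-!
Substituting `λ = 2 - 2 cos δ` turns the three-term recurrence into the one satisfied by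
`sin (k δ)`, which gives
`(1 + M) sin δ · A_n(2 - 2 cos δ) = (-1)ⁿ ((1 + M) sin ((n + 1) δ) - sin (n δ))`.
The right-hand side is positive for `0 < δ ≤ π / (2 (n + 1))` and negative at `δ = π / (n + 1)`,
while `A_n` has no zeros in `λ ≤ 0`. Hence the smallest zero lies between
`2 - 2 cos (π / (2 (n + 1)))` and `2 - 2 cos (π / (n + 1))`, and `2 - 2 cos δ` is comparable
to `δ²` on `[0, π]`.
-/

open Polynomial

open Real

theorem Polynomial.exists_isLeast_eval_eq_zero {p : ℝ[X]} (hp : p ≠ 0)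
    (hroot : ∃ x, p.eval x = 0) : ∃ μ, IsLeast {x | p.eval x = 0} μ := by
  have hset : {x | p.eval x = 0} = ↑p.roots.toFinset := by
    ext x
    simp [mem_roots hp]
  obtain ⟨x, hx⟩ := hroot
  have hne : p.roots.toFinset.Nonempty := ⟨x, by simpa [mem_roots hp] using hx⟩
  exact ⟨_, hset ▸ Finset.isLeast_min' _ hne⟩

theorem Real.two_sub_two_cos_le_sq (δ : ℝ) : 2 - 2 * cos δ ≤ δ ^ 2 := by
  linarith [one_sub_sq_div_two_le_cos (x := δ)]

theorem Real.mul_sq_le_two_sub_two_cos {δ : ℝ} (hδ : |δ| ≤ π) :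
    4 / π ^ 2 * δ ^ 2 ≤ 2 - 2 * cos δ := by
  have h := cos_le_one_sub_mul_cos_sq hδ
  linarith [show 4 / π ^ 2 * δ ^ 2 = 2 * (2 / π ^ 2 * δ ^ 2) by ring]

namespace ApolyB

noncomputable def sinCombo (M : ℝ) (n : ℕ) (δ : ℝ) : ℝ :=
  (1 + M) * sin ((n + 1) * δ) - sin (n * δ)

variable {M : ℝ}

theorem eval_add_two (x : ℝ) (n : ℕ) :
    (ApolyB M (n + 2)).eval x = (x - 2) * (ApolyB M (n + 1)).eval x - (ApolyB M n).eval x := by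
  simp [ApolyB]

theorem sinCombo_add_two (n : ℕ) (δ : ℝ) :
    sinCombo M (n + 2) δ = 2 * cos δ * sinCombo M (n + 1) δ - sinCombo M n δ := by
  have h (k : ℝ) : sin ((k + 2) * δ) = 2 * cos δ * sin ((k + 1) * δ) - sin (k * δ) := by
    rw [show (k + 2) * δ = (k + 1) * δ + δ by ring, show k * δ = (k + 1) * δ - δ by ring,
      sin_add, sin_sub]
    ring
  simp only [sinCombo]
  push_cast
  linear_combination (norm := ring_nf) (1 + M) * h (n + 1) - h n

theorem sin_mul_eval_two_sub_two_cos (hM : 1 + M ≠ 0) (δ : ℝ) (n : ℕ) :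
    (1 + M) * sin δ * (ApolyB M n).eval (2 - 2 * cos δ) = (-1) ^ n * sinCombo M n δ := by
  induction n using Nat.twoStepInduction with
  | zero => simp [ApolyB, sinCombo]
  | one =>
    simp only [ApolyB, sinCombo, eval_sub, eval_X, eval_C, Nat.cast_one, pow_one, one_mul]
    rw [show (1 + 1) * δ = 2 * δ by ring, sin_two_mul]
    field_simp
    ring
  | more n ih₀ ih₁ =>
    rw [eval_add_two, sinCombo_add_two]
    linear_combination (-2 * cos δ) * ih₁ - ih₀

theorem eval_two_sub_two_cos_eq_zero_iff (hM : 1 + M ≠ 0) {δ : ℝ} (hδ₀ : 0 < δ) (hδπ : δ < π)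
    (n : ℕ) : (ApolyB M n).eval (2 - 2 * cos δ) = 0 ↔ sinCombo M n δ = 0 := by
  have h := sin_mul_eval_two_sub_two_cos hM δ n
  have hsin : (1 + M) * sin δ ≠ 0 := mul_ne_zero hM (sin_pos_of_pos_of_lt_pi hδ₀ hδπ).ne'
  constructor
  · intro h0
    rw [h0, mul_zero, eq_comm] at h
    exact (mul_eq_zero.1 h).resolve_left (pow_ne_zero n (by norm_num))
  · intro h0
    rw [h0, mul_zero] at h
    exact (mul_eq_zero.1 h).resolve_left hsin

theorem one_le_neg_one_pow_mul_eval_of_nonpos (hM : 0 ≤ M) {x : ℝ} (hx : x ≤ 0) (n : ℕ) :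
    1 ≤ (-1) ^ n * (ApolyB M n).eval x := by
  set b : ℕ → ℝ := fun n ↦ (-1) ^ n * (ApolyB M n).eval x
  have hb (n : ℕ) : b (n + 2) = (2 - x) * b (n + 1) - b n := by
    simp only [b, eval_add_two]; ring
  -- `b (n + 2) - b (n + 1) = (b (n + 1) - b n) - x b (n + 1)`, and `-x b (n + 1) ≥ 0` keeps `b` increasing.
  suffices ∀ n, 1 ≤ b n ∧ b n ≤ b (n + 1) from (this n).1
  intro n
  induction n with
  | zero =>
    have : 1 ≤ (1 + 2 * M) / (1 + M) := by rw [le_div_iff₀ (by linarith)]; linarith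
    refine ⟨by simp [b, ApolyB], ?_⟩
    simp only [b, ApolyB, pow_zero, one_mul, eval_one, eval_sub, eval_X, eval_C]
    linarith
  | succ n ih =>
    refine ⟨ih.1.trans ih.2, ?_⟩
    rw [hb]
    nlinarith [mul_nonneg (neg_nonneg.2 hx) (zero_le_one.trans (ih.1.trans ih.2))]

theorem ne_zero (hM : 0 ≤ M) (n : ℕ) : ApolyB M n ≠ 0 := by
  intro h
  have := one_le_neg_one_pow_mul_eval_of_nonpos hM le_rfl n
  norm_num [h] at this

theorem sinCombo_pos (hM : 0 ≤ M) {n : ℕ} {δ : ℝ} (hδ : 0 < δ) (hδn : (n + 1) * δ ≤ π / 2) :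
    0 < sinCombo M n δ := by
  have hn : 0 ≤ (n : ℝ) * δ := by positivity
  have hlt : sin (n * δ) < sin ((n + 1) * δ) :=
    strictMonoOn_sin ⟨by linarith [pi_pos], by linarith⟩ ⟨by linarith [pi_pos], hδn⟩
      (by linarith)
  have hnonneg : 0 ≤ sin ((n + 1) * δ) := sin_nonneg_of_nonneg_of_le_pi (by linarith)
    (by linarith [pi_pos])
  unfold sinCombo
  nlinarith

theorem sinCombo_pi_div_succ_neg {n : ℕ} (hn : 1 ≤ n) : sinCombo M n (π / (n + 1)) < 0 := by
  have hn1 : (0 : ℝ) < n + 1 := by positivity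
  have hpi : ((n : ℝ) + 1) * (π / (n + 1)) = π := by field_simp
  have hpos : 0 < sin (n * (π / (n + 1))) := by
    apply sin_pos_of_pos_of_lt_pi (by positivity)
    rw [mul_div_assoc', div_lt_iff₀ hn1]
    nlinarith [pi_pos]
  simp only [sinCombo, hpi, sin_pi, mul_zero, zero_sub, neg_neg_iff_pos, hpos]

theorem exists_sinCombo_eq_zero (hM : 0 ≤ M) {n : ℕ} (hn : 1 ≤ n) :
    ∃ δ ∈ Set.Icc (π / (2 * (n + 1))) (π / (n + 1)), sinCombo M n δ = 0 := by
  have hn1 : (0 : ℝ) < n + 1 := by positivity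
  have hle : π / (2 * (n + 1)) ≤ π / (n + 1) :=
    div_le_div_of_nonneg_left pi_pos.le hn1 (by linarith)
  have hcont : Continuous (sinCombo M n) := by unfold sinCombo; fun_prop
  have hleft : 0 < sinCombo M n (π / (2 * (n + 1))) :=
    sinCombo_pos hM (by positivity) (by field_simp; rfl)
  exact intermediate_value_Icc' hle hcont.continuousOn
    ⟨(sinCombo_pi_div_succ_neg hn).le, hleft.le⟩

theorem eval_ne_zero_of_le (hM : 0 ≤ M) {n : ℕ} {x : ℝ}
    (hx : x ≤ 2 - 2 * cos (π / (2 * (n + 1)))) : (ApolyB M n).eval x ≠ 0 := by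
  intro h0
  rcases le_or_gt x 0 with hx₀ | hx₀
  · have := one_le_neg_one_pow_mul_eval_of_nonpos hM hx₀ n
    norm_num [h0] at this
  set a := π / (2 * (n + 1)) with ha
  have ha₀ : 0 < a := by positivity
  have haπ : a ≤ π / 2 := div_le_div_of_nonneg_left pi_pos.le two_pos (by linarith)
  have hcos : -1 < 1 - x / 2 := by
    linarith [cos_nonneg_of_neg_pi_div_two_le_of_le (by linarith) haπ]
  set δ := arccos (1 - x / 2)
  have hx_eq : x = 2 - 2 * cos δ := by rw [cos_arccos hcos.le (by linarith)]; ring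
  have hδ₀ : 0 < δ := arccos_pos.2 (by linarith)
  have hδπ : δ < π := arccos_lt_pi.2 hcos
  have hδa : δ ≤ a := by
    rw [← arccos_cos ha₀.le (by linarith [pi_pos] : a ≤ π)]
    exact arccos_le_arccos (by linarith)
  rw [hx_eq, eval_two_sub_two_cos_eq_zero_iff (by linarith) hδ₀ hδπ] at h0
  have hδn : (n + 1) * δ ≤ π / 2 := by
    rw [ha, le_div_iff₀ (by positivity)] at hδa
    linarith
  exact (sinCombo_pos hM hδ₀ hδn).ne' h0

end ApolyB

theorem stmt11 (M : ℝ) (hM : 0 ≤ M) :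
    ∃ C₁ C₂ : ℝ, 0 < C₁ ∧ C₁ ≤ C₂ ∧
      ∀ n : ℕ, 1 ≤ n → ∃ μ : ℝ,
        IsLeast {x : ℝ | (ApolyB M n).eval x = 0} μ ∧
        C₁ / (n : ℝ) ^ 2 ≤ μ ∧ μ ≤ C₂ / (n : ℝ) ^ 2 := by
  refine ⟨1 / 4, π ^ 2, by norm_num, by nlinarith [pi_gt_three], fun n hn ↦ ?_⟩
  have hn₁ : (1 : ℝ) ≤ n := by exact_mod_cast hn
  obtain ⟨δ, ⟨hδa, hδb⟩, hδ⟩ := ApolyB.exists_sinCombo_eq_zero hM hn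
  have hδ₀ : 0 < δ := lt_of_lt_of_le (by positivity) hδa
  have hδπ : δ < π := hδb.trans_lt (div_lt_self pi_pos (by linarith))
  have hroot : (ApolyB M n).eval (2 - 2 * cos δ) = 0 :=
    (ApolyB.eval_two_sub_two_cos_eq_zero_iff (by linarith) hδ₀ hδπ n).2 hδ
  obtain ⟨μ, hμ⟩ := exists_isLeast_eval_eq_zero (ApolyB.ne_zero hM n) ⟨_, hroot⟩
  refine ⟨μ, hμ, ?_, ?_⟩
  · have ha : |π / (2 * (n + 1))| ≤ π := by
      rw [abs_of_pos (by positivity)]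
      exact div_le_self pi_pos.le (by linarith)
    calc 1 / 4 / (n : ℝ) ^ 2 ≤ 1 / (n + 1) ^ 2 := by
          rw [div_div, one_div_le_one_div (by positivity) (by positivity)]
          nlinarith
      _ = 4 / π ^ 2 * (π / (2 * (n + 1))) ^ 2 := by field_simp; ring
      _ ≤ 2 - 2 * cos (π / (2 * (n + 1))) := mul_sq_le_two_sub_two_cos ha
      _ ≤ μ := le_of_not_gt fun h ↦ ApolyB.eval_ne_zero_of_le hM h.le hμ.1
  · calc μ ≤ 2 - 2 * cos δ := hμ.2 hroot
      _ ≤ δ ^ 2 := two_sub_two_cos_le_sq δ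
      _ ≤ (π / (n + 1)) ^ 2 := by gcongr
      _ ≤ π ^ 2 / (n : ℝ) ^ 2 := by
          rw [div_pow]
          gcongr
          linarith
end
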